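/- arXiv:1502.04605 — 2 statements merged into one kernel-verified Lean document; each statement's English description precedes it below -/
import Mathlib

section
/- Let f : [a,b] → ℝ be twice differentiable with m ≤ f''(x) ≤ M for all x ∈ [a,b]. Then m (b-a)²/24 ≤ (f(a)+f(b))/2 + f((a+b)/2) - (2/(b-a)) ∫_a^b f(x) dx ≤ M (b-a)²/24. -/
open Set intervalIntegral

noncomputable def supOn (a b : ℝ) (f : ℝ → ℝ) : ℝ := ⨆ x : Set.Icc a b, |f x|

def IsC2On (a b : ℝ) (g g' g'' : ℝ → ℝ) : Prop :=
  (∀ x ∈ Set.Icc a b, HasDerivWithinAt g (g' x) (Set.Icc a b) x) ∧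
  (∀ x ∈ Set.Icc a b, HasDerivWithinAt g' (g'' x) (Set.Icc a b) x) ∧
  ContinuousOn g'' (Set.Icc a b)

noncomputable def KF (a b t : ℝ) (f : ℝ → ℝ) : ℝ :=
  sInf {v : ℝ | ∃ g g' g'', IsC2On a b g g' g'' ∧
    v = supOn a b (fun x => f x - g x) + t * supOn a b g''}

noncomputable def bullen (a b : ℝ) (f : ℝ → ℝ) : ℝ :=
  (f a + f b) / 2 + f ((a + b) / 2) - (2 / (b - a)) * ∫ x in a..b, f x

noncomputable def bullenC (a b : ℝ) (n : ℕ) (x : ℕ → ℝ) (f : ℝ → ℝ) : ℝ :=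
  (1 / (b - a)) * ∑ i ∈ Finset.range n, (x (i+1) - x i) *
    ((f (x i) + f (x (i+1))) / 2 + f ((x i + x (i+1)) / 2)
      - (2 / (x (i+1) - x i)) * ∫ t in (x i)..(x (i+1)), f t)

noncomputable def omega1 (a b : ℝ) (f : ℝ → ℝ) (h : ℝ) : ℝ :=
  sSup {v : ℝ | ∃ x ∈ Set.Icc a b, ∃ y ∈ Set.Icc a b, |x - y| ≤ h ∧ v = |f x - f y|}

noncomputable def omega2 (a b : ℝ) (f : ℝ → ℝ) (h : ℝ) : ℝ :=
  sSup {v : ℝ | ∃ x t : ℝ, 0 ≤ t ∧ t ≤ h ∧ x - t ∈ Set.Icc a b ∧ x + t ∈ Set.Icc a b ∧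
    v = |f (x + t) - 2 * f x + f (x - t)|}

/-! The Bullen functional is linear, takes the value `c (b - a)² / 24` at `x ↦ c x² / 2`, and is
nonnegative on continuous convex functions: on each half of `[a, b]` a convex function lies below
its chord, so the two-panel trapezoid rule overestimates its integral, and the Bullen functional is
`2 / (b - a)` times that overestimate. Since `f - m x² / 2` and `M x² / 2 - f` have nonnegative
second derivative, they are convex, which gives both bounds. -/

theorem ConvexOn.integral_le_trapezoid {a b : ℝ} {g : ℝ → ℝ} (hab : a ≤ b)
    (hg : ConvexOn ℝ (Icc a b) g) (hgc : ContinuousOn g (Icc a b)) :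
    ∫ x in a..b, g x ≤ (b - a) * ((g a + g b) / 2) := by
  rcases hab.eq_or_lt with rfl | hab
  · simp
  have hchord : ∀ x ∈ Ioo a b, (b - a) * g x ≤ (b - x) * g a + (x - a) * g b := fun x hx =>
    hg.secant_mono_aux1 (left_mem_Icc.2 hab.le) (right_mem_Icc.2 hab.le) hx.1 hx.2
  have hint : ∫ x in a..b, (b - a) * g x ≤ ∫ x in a..b, ((b - x) * g a + (x - a) * g b) :=
    integral_mono_on_of_le_Ioo hab.le ((hgc.intervalIntegrable_of_Icc hab.le).const_mul _)
      (Continuous.intervalIntegrable (by fun_prop) a b) hchord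
  have hchord_int :
      ∫ x in a..b, ((b - x) * g a + (x - a) * g b) = (b - a) ^ 2 * ((g a + g b) / 2) := by
    rw [integral_add (Continuous.intervalIntegrable (by fun_prop) a b)
      (Continuous.intervalIntegrable (by fun_prop) a b), integral_mul_const, integral_mul_const,
      integral_sub intervalIntegrable_const intervalIntegral.intervalIntegrable_id,
      integral_sub intervalIntegral.intervalIntegrable_id intervalIntegrable_const]
    simp only [integral_const, integral_id, smul_eq_mul]
    ring
  rw [integral_const_mul, hchord_int] at hint
  nlinarith [sub_pos.2 hab]

theorem bullen_nonneg_of_convexOn {a b : ℝ} {g : ℝ → ℝ} (hab : a < b)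
    (hg : ConvexOn ℝ (Icc a b) g) (hgc : ContinuousOn g (Icc a b)) :
    0 ≤ bullen a b g := by
  set c := (a + b) / 2 with hc
  have hac : a ≤ c := by linarith
  have hcb : c ≤ b := by linarith
  have hleft : Icc a c ⊆ Icc a b := Icc_subset_Icc le_rfl hcb
  have hright : Icc c b ⊆ Icc a b := Icc_subset_Icc hac le_rfl
  have h₁ := (hg.subset hleft (convex_Icc a c)).integral_le_trapezoid hac (hgc.mono hleft)
  have h₂ := (hg.subset hright (convex_Icc c b)).integral_le_trapezoid hcb (hgc.mono hright)
  rw [show c - a = (b - a) / 2 by linarith] at h₁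
  rw [show b - c = (b - a) / 2 by linarith] at h₂
  unfold bullen
  rw [← integral_add_adjacent_intervals ((hgc.mono hleft).intervalIntegrable_of_Icc hac)
    ((hgc.mono hright).intervalIntegrable_of_Icc hcb), sub_nonneg, div_mul_eq_mul_div,
    div_le_iff₀ (sub_pos.2 hab)]
  linarith

theorem bullen_sub {a b : ℝ} {f g : ℝ → ℝ} (hf : IntervalIntegrable f MeasureTheory.volume a b)
    (hg : IntervalIntegrable g MeasureTheory.volume a b) :
    bullen a b (fun x => f x - g x) = bullen a b f - bullen a b g := by
  simp only [bullen, integral_sub hf hg]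
  ring

theorem bullen_neg (a b : ℝ) (f : ℝ → ℝ) : bullen a b (-f) = -bullen a b f := by
  simp only [bullen, Pi.neg_apply, integral_neg]
  ring

theorem bullen_half_mul_sq {a b : ℝ} (hab : a ≠ b) (c : ℝ) :
    bullen a b (fun x => c / 2 * x ^ 2) = c * (b - a) ^ 2 / 24 := by
  have : b - a ≠ 0 := sub_ne_zero.2 hab.symm
  simp only [bullen, integral_const_mul, integral_pow]
  field_simp
  ring

theorem convexOn_sub_half_mul_sq {D : Set ℝ} (hD : Convex ℝ D) {f f' f'' : ℝ → ℝ} {m : ℝ}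
    (hf' : ∀ x ∈ D, HasDerivWithinAt f (f' x) D x)
    (hf'' : ∀ x ∈ D, HasDerivWithinAt f' (f'' x) D x) (hm : ∀ x ∈ D, m ≤ f'' x) :
    ConvexOn ℝ D (fun x => f x - m / 2 * x ^ 2) := by
  refine convexOn_of_hasDerivWithinAt2_nonneg hD (f' := fun x => f' x - m * x)
    (f'' := fun x => f'' x - m) ?_ (fun x hx => ?_) (fun x hx => ?_) (fun x hx => ?_)
  · exact ContinuousOn.sub (fun x hx => (hf' x hx).continuousWithinAt) (by fun_prop)
  · have hsq : HasDerivAt (fun y => m / 2 * y ^ 2) (m * x) x :=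
      ((hasDerivAt_pow 2 x).const_mul (m / 2)).congr_deriv (by push_cast; ring)
    exact ((hf' x (interior_subset hx)).mono interior_subset).sub hsq.hasDerivWithinAt
  · have hlin : HasDerivAt (fun y => m * y) m x := by
      simpa using (hasDerivAt_id x).const_mul m
    exact ((hf'' x (interior_subset hx)).mono interior_subset).sub hlin.hasDerivWithinAt
  · exact sub_nonneg.2 (hm x (interior_subset hx))

theorem le_bullen_of_le_deriv2 {a b : ℝ} (hab : a < b) {f f' f'' : ℝ → ℝ} {m : ℝ}
    (hf' : ∀ x ∈ Icc a b, HasDerivWithinAt f (f' x) (Icc a b) x)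
    (hf'' : ∀ x ∈ Icc a b, HasDerivWithinAt f' (f'' x) (Icc a b) x)
    (hm : ∀ x ∈ Icc a b, m ≤ f'' x) :
    m * (b - a) ^ 2 / 24 ≤ bullen a b f := by
  have hfc : ContinuousOn f (Icc a b) := fun x hx => (hf' x hx).continuousWithinAt
  have hconv := convexOn_sub_half_mul_sq (convex_Icc a b) hf' hf'' hm
  have hnonneg := bullen_nonneg_of_convexOn hab hconv (hfc.sub (by fun_prop))
  rw [bullen_sub (hfc.intervalIntegrable_of_Icc hab.le)
    (Continuous.intervalIntegrable (by fun_prop) a b), bullen_half_mul_sq hab.ne] at hnonneg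
  linarith

theorem stmt2 (a b : ℝ) (hab : a < b) (f f' f'' : ℝ → ℝ) (m M : ℝ)
    (hf' : ∀ x ∈ Set.Icc a b, HasDerivWithinAt f (f' x) (Set.Icc a b) x)
    (hf'' : ∀ x ∈ Set.Icc a b, HasDerivWithinAt f' (f'' x) (Set.Icc a b) x)
    (hm : ∀ x ∈ Set.Icc a b, m ≤ f'' x) (hM : ∀ x ∈ Set.Icc a b, f'' x ≤ M) :
    m * (b - a) ^ 2 / 24 ≤
      (f a + f b) / 2 + f ((a + b) / 2) - (2 / (b - a)) * ∫ x in a..b, f x ∧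
    (f a + f b) / 2 + f ((a + b) / 2) - (2 / (b - a)) * ∫ x in a..b, f x ≤
      M * (b - a) ^ 2 / 24 := by
  refine ⟨le_bullen_of_le_deriv2 hab hf' hf'' hm, ?_⟩
  have hneg := le_bullen_of_le_deriv2 (m := -M) hab (fun x hx => (hf' x hx).neg)
    (fun x hx => (hf'' x hx).neg) (fun x hx => neg_le_neg (hM x hx))
  rw [bullen_neg] at hneg
  unfold bullen at hneg
  linarith
end

section
/- For every f ∈ C[a,b] and every x ∈ [a,b], |(1/2)[(x-a)f(a) + (b-a)f(x) + (b-x)f(b)] - ∫_a^b f(t) dt| ≤ 2(b-a) K(f; ((x-a)³+(b-x)³)/(24(b-a))), where K(f;t) = inf { ‖f-g‖_∞ + t‖g''‖_∞ : g ∈ C²[a,b] }. -/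
open Set intervalIntegral

/-!
Approximating `f` by a `C²` function `g`, the quadrature error of `f` splits into that of `f - g`,
bounded by `2 (b - a) ‖f - g‖`, plus that of `g`. The latter is the sum of the trapezoid errors on
`[a, x]` and `[x, b]`, and on `[c, d]` the trapezoid error of `g` equals
`∫ (t - c) (d - t) / 2 · g''(t) dt`, hence is at most `(d - c)³ / 12 · ‖g''‖`.
Taking the infimum over `g` gives the bound through the K-functional.
-/

open MeasureTheory

lemma abs_le_supOn {a b : ℝ} {h : ℝ → ℝ} (hh : ContinuousOn h (Icc a b)) {t : ℝ}
    (ht : t ∈ Icc a b) : |h t| ≤ supOn a b h := by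
  obtain ⟨C, hC⟩ := isCompact_Icc.exists_bound_of_continuousOn hh
  refine le_ciSup (f := fun y : Icc a b => |h y|) ⟨C, ?_⟩ ⟨t, ht⟩
  rintro v ⟨y, rfl⟩
  exact hC y y.2

namespace IsC2On

variable {a b : ℝ} {g g' g'' : ℝ → ℝ}

lemma continuousOn (hg : IsC2On a b g g' g'') : ContinuousOn g (Icc a b) :=
  fun y hy => (hg.1 y hy).continuousWithinAt

lemma continuousOn_deriv (hg : IsC2On a b g g' g'') : ContinuousOn g' (Icc a b) :=
  fun y hy => (hg.2.1 y hy).continuousWithinAt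

lemma continuousOn_deriv2 (hg : IsC2On a b g g' g'') : ContinuousOn g'' (Icc a b) :=
  hg.2.2

lemma mono {c d : ℝ} (hg : IsC2On a b g g' g'') (hsub : Icc c d ⊆ Icc a b) :
    IsC2On c d g g' g'' :=
  ⟨fun y hy => (hg.1 y (hsub hy)).mono hsub, fun y hy => (hg.2.1 y (hsub hy)).mono hsub,
    hg.2.2.mono hsub⟩

lemma hasDerivAt (hg : IsC2On a b g g' g'') {t : ℝ} (ht : t ∈ Ioo a b) :
    HasDerivAt g (g' t) t :=
  (hg.1 t (Ioo_subset_Icc_self ht)).hasDerivAt (Icc_mem_nhds ht.1 ht.2)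

lemma hasDerivAt_deriv (hg : IsC2On a b g g' g'') {t : ℝ} (ht : t ∈ Ioo a b) :
    HasDerivAt g' (g'' t) t :=
  (hg.2.1 t (Ioo_subset_Icc_self ht)).hasDerivAt (Icc_mem_nhds ht.1 ht.2)

end IsC2On

lemma integral_trapezoidKernel (c d : ℝ) :
    ∫ t in c..d, (t - c) * (d - t) / 2 = (d - c) ^ 3 / 12 := by
  have hderiv : ∀ t ∈ uIcc c d, HasDerivAt
      (fun t : ℝ => -(t ^ 3) / 6 + (c + d) * t ^ 2 / 4 - c * d * t / 2)
      ((t - c) * (d - t) / 2) t := by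
    intro t _
    exact (((hasDerivAt_pow 3 t).neg.div_const 6).add
      (((hasDerivAt_pow 2 t).const_mul (c + d)).div_const 4)).sub
      (((hasDerivAt_id t).const_mul (c * d)).div_const 2) |>.congr_deriv (by ring)
  rw [integral_eq_sub_of_hasDerivAt hderiv ((by fun_prop : Continuous _).intervalIntegrable _ _)]
  ring

theorem trapezoid_sub_integral_eq {c d : ℝ} {g g' g'' : ℝ → ℝ} (hcd : c ≤ d)
    (hg : IsC2On c d g g' g'') :
    (d - c) * (g c + g d) / 2 - ∫ t in c..d, g t =
      ∫ t in c..d, (t - c) * (d - t) / 2 * g'' t := by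
  have hint : IntervalIntegrable (fun t => (t - c) * (d - t) / 2 * g'' t) volume c d :=
    ((continuousOn_id.sub continuousOn_const).mul (continuousOn_const.sub continuousOn_id)
      |>.div_const 2 |>.mul hg.continuousOn_deriv2).intervalIntegrable_of_Icc hcd
  have hgint : IntervalIntegrable g volume c d := hg.continuousOn.intervalIntegrable_of_Icc hcd
  -- `Φ' = (t - c) (d - t) / 2 · g'' + g` and `Φ d - Φ c` is the trapezoid sum.
  have hΦ := integral_eq_sub_of_hasDerivAt_of_le hcd
    (f := fun t => (t - c) * (d - t) / 2 * g' t - (c + d - 2 * t) / 2 * g t)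
    (by
      have := hg.continuousOn
      have := hg.continuousOn_deriv
      fun_prop)
    (fun t ht =>
      ((((hasDerivAt_id t).sub_const c).mul ((hasDerivAt_id t).const_sub d)).div_const 2
        |>.mul (hg.hasDerivAt_deriv ht)).sub
        ((((hasDerivAt_id t).const_mul 2).const_sub (c + d)).div_const 2
          |>.mul (hg.hasDerivAt ht)) |>.congr_deriv (by simp only [id_eq, Pi.mul_apply]; ring))
    (hint.add hgint)
  rw [integral_add hint hgint] at hΦ
  linarith

theorem abs_trapezoid_sub_integral_le {c d M : ℝ} {g g' g'' : ℝ → ℝ} (hcd : c ≤ d)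
    (hg : IsC2On c d g g' g'') (hM : ∀ t ∈ Icc c d, |g'' t| ≤ M) :
    |(d - c) * (g c + g d) / 2 - ∫ t in c..d, g t| ≤ (d - c) ^ 3 / 12 * M := by
  rw [trapezoid_sub_integral_eq hcd hg, ← integral_trapezoidKernel, ← intervalIntegral.integral_mul_const,
    ← Real.norm_eq_abs]
  refine intervalIntegral.norm_integral_le_of_norm_le hcd (.of_forall fun t ht => ?_)
    ((by fun_prop : Continuous fun t => (t - c) * (d - t) / 2 * M).intervalIntegrable (μ := volume) _ _)
  have hk : 0 ≤ (t - c) * (d - t) / 2 := by nlinarith [ht.1, ht.2]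
  rw [Real.norm_eq_abs, abs_mul, abs_of_nonneg hk]
  exact mul_le_mul_of_nonneg_left (hM t (Ioc_subset_Icc_self ht)) hk

/-- The error of the trapezoid rule on the nodes `a, x, b`. -/
noncomputable def compositeTrapezoidError (a b x : ℝ) (f : ℝ → ℝ) : ℝ :=
  (1 / 2) * ((x - a) * f a + (b - a) * f x + (b - x) * f b) - ∫ t in a..b, f t

section compositeTrapezoidError

variable {a b x : ℝ}

lemma compositeTrapezoidError_eq_sub_add {f g : ℝ → ℝ} (hf : IntervalIntegrable f volume a b)
    (hg : IntervalIntegrable g volume a b) :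
    compositeTrapezoidError a b x f =
      compositeTrapezoidError a b x (fun t => f t - g t) + compositeTrapezoidError a b x g := by
  simp only [compositeTrapezoidError, integral_sub hf hg]
  ring

lemma compositeTrapezoidError_eq_add {g : ℝ → ℝ} (hax : IntervalIntegrable g volume a x)
    (hxb : IntervalIntegrable g volume x b) :
    compositeTrapezoidError a b x g =
      ((x - a) * (g a + g x) / 2 - ∫ t in a..x, g t) +
        ((b - x) * (g x + g b) / 2 - ∫ t in x..b, g t) := by
  rw [compositeTrapezoidError, ← integral_add_adjacent_intervals hax hxb]
  ring

theorem abs_compositeTrapezoidError_le_of_abs_le {h : ℝ → ℝ} {M : ℝ} (hx : x ∈ Icc a b)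
    (hM : ∀ t ∈ Icc a b, |h t| ≤ M) :
    |compositeTrapezoidError a b x h| ≤ 2 * (b - a) * M := by
  have hab : a ≤ b := hx.1.trans hx.2
  have hnodes : |(1 / 2) * ((x - a) * h a + (b - a) * h x + (b - x) * h b)| ≤ (b - a) * M := by
    have ha := abs_le.mp (hM a ⟨le_rfl, hab⟩)
    have hx' := abs_le.mp (hM x hx)
    have hb := abs_le.mp (hM b ⟨hab, le_rfl⟩)
    have hxa : 0 ≤ x - a := sub_nonneg.mpr hx.1
    have hbx : 0 ≤ b - x := sub_nonneg.mpr hx.2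
    have hba : 0 ≤ b - a := sub_nonneg.mpr hab
    rw [abs_le]
    constructor <;> nlinarith [mul_le_mul_of_nonneg_left ha.1 hxa]
  have hint : |∫ t in a..b, h t| ≤ (b - a) * M := by
    rw [← Real.norm_eq_abs, mul_comm, ← abs_of_nonneg (sub_nonneg.mpr hab)]
    refine norm_integral_le_of_norm_le_const fun t ht => hM t ?_
    rw [uIoc_of_le hab] at ht
    exact Ioc_subset_Icc_self ht
  calc |compositeTrapezoidError a b x h|
      ≤ |(1 / 2) * ((x - a) * h a + (b - a) * h x + (b - x) * h b)| + |∫ t in a..b, h t| :=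
        abs_sub _ _
    _ ≤ 2 * (b - a) * M := by linarith

theorem abs_compositeTrapezoidError_le_of_isC2On {g g' g'' : ℝ → ℝ} {M : ℝ} (hx : x ∈ Icc a b)
    (hg : IsC2On a b g g' g'') (hM : ∀ t ∈ Icc a b, |g'' t| ≤ M) :
    |compositeTrapezoidError a b x g| ≤ ((x - a) ^ 3 + (b - x) ^ 3) / 12 * M := by
  have hax : Icc a x ⊆ Icc a b := Icc_subset_Icc_right hx.2
  have hxb : Icc x b ⊆ Icc a b := Icc_subset_Icc_left hx.1
  rw [compositeTrapezoidError_eq_add (hg.continuousOn.mono hax |>.intervalIntegrable_of_Icc hx.1)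
    (hg.continuousOn.mono hxb |>.intervalIntegrable_of_Icc hx.2)]
  calc _ ≤ _ := abs_add_le _ _
    _ ≤ (x - a) ^ 3 / 12 * M + (b - x) ^ 3 / 12 * M :=
        add_le_add (abs_trapezoid_sub_integral_le hx.1 (hg.mono hax) fun t ht => hM t (hax ht))
          (abs_trapezoid_sub_integral_le hx.2 (hg.mono hxb) fun t ht => hM t (hxb ht))
    _ = ((x - a) ^ 3 + (b - x) ^ 3) / 12 * M := by ring

end compositeTrapezoidError

lemma le_KF {a b t v : ℝ} {f : ℝ → ℝ}
    (h : ∀ g g' g'', IsC2On a b g g' g'' →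
      v ≤ supOn a b (fun x => f x - g x) + t * supOn a b g'') :
    v ≤ KF a b t f := by
  have hzero : IsC2On a b 0 0 0 :=
    ⟨fun y _ => hasDerivWithinAt_const y _ 0, fun y _ => hasDerivWithinAt_const y _ 0,
      continuousOn_const⟩
  refine le_csInf ⟨_, 0, 0, 0, hzero, rfl⟩ ?_
  rintro _ ⟨g, g', g'', hg, rfl⟩
  exact h g g' g'' hg

theorem stmt11 (a b : ℝ) (hab : a < b) (f : ℝ → ℝ)
    (hf : ContinuousOn f (Set.Icc a b)) (x : ℝ) (hx : x ∈ Set.Icc a b) :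
    |(1 / 2) * ((x - a) * f a + (b - a) * f x + (b - x) * f b) - ∫ t in a..b, f t| ≤
      2 * (b - a) * KF a b (((x - a) ^ 3 + (b - x) ^ 3) / (24 * (b - a))) f := by
  have hpos : 0 < 2 * (b - a) := by linarith
  have hba : b - a ≠ 0 := by linarith
  change |compositeTrapezoidError a b x f| ≤ _
  rw [← div_le_iff₀' hpos]
  refine le_KF fun g g' g'' hg => ?_
  rw [div_le_iff₀' hpos, compositeTrapezoidError_eq_sub_add (g := g)
    (hf.intervalIntegrable_of_Icc hab.le) (hg.continuousOn.intervalIntegrable_of_Icc hab.le)]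
  have hfg := abs_compositeTrapezoidError_le_of_abs_le hx
    fun t ht => abs_le_supOn (h := fun t => f t - g t) (hf.sub hg.continuousOn) ht
  have hg'' := abs_compositeTrapezoidError_le_of_isC2On hx hg
    fun t ht => abs_le_supOn hg.continuousOn_deriv2 ht
  calc _ ≤ _ := abs_add_le _ _
    _ ≤ _ := add_le_add hfg hg''
    _ = _ := by field_simp; ring
end
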